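/- arXiv:2011.01050 — 4 statements merged into one kernel-verified Lean document; each statement's English description precedes it below -/
import Mathlib

section
/- Let E ⊆ S = k[X_0,…,X_{n−1}] be finite with a simple zero (a_0,…,a_{n−1}) ∈ k^n, and suppose that for some d the space V_{E,d} contains n linearly independent polynomials of degree at most 1. Then X_i − a_i ∈ V_{E,d} for every i = 0,…,n−1, and {X_0 − a_0, …, X_{n−1} − a_{n−1}} is the reduced Gröbner basis of the ideal (E) with respect to any term order on S. -/
open MvPolynomial

/-- `V_{E,d}`: the smallest `k`-subspace of the polynomial ring containing every `f ∈ E`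
of total degree at most `d` and closed under multiplication by ring elements
as long as the degree stays at most `d`. -/
noncomputable def Vspace {k : Type*} [Field k] {σ : Type*} (E : Finset (MvPolynomial σ k)) (d : ℕ) :
    Submodule k (MvPolynomial σ k) :=
  sInf {W | (∀ f ∈ E, f.totalDegree ≤ d → f ∈ W) ∧
            ∀ g ∈ W, ∀ h : MvPolynomial σ k, (g * h).totalDegree ≤ d → g * h ∈ W}

/-- The leading exponent (exponent of the leading monomial) of a polynomial with respect to
a monomial order. -/
noncomputable def leadExp {k : Type*} [Field k] {σ : Type*} (m : MonomialOrder σ)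
    (f : MvPolynomial σ k) : σ →₀ ℕ :=
  m.toSyn.symm (f.support.sup fun a => m.toSyn a)

/-- `G` is a Gröbner basis of the ideal `I` with respect to the monomial order `m`:
its elements lie in `I` and the leading monomial of every nonzero element of `I` is
divisible by the leading monomial of some nonzero element of `G`. -/
def IsGroebnerBasis {k : Type*} [Field k] {σ : Type*} (m : MonomialOrder σ)
    (I : Ideal (MvPolynomial σ k)) (G : Set (MvPolynomial σ k)) : Prop :=
  (∀ g ∈ G, g ∈ I) ∧ ∀ f ∈ I, f ≠ 0 → ∃ g ∈ G, g ≠ 0 ∧ leadExp m g ≤ leadExp m f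

/-- A monomial order is degree-compatible if it refines the total degree. -/
def DegreeCompatible {σ : Type*} (m : MonomialOrder σ) : Prop :=
  ∀ a b : σ →₀ ℕ, a.degree < b.degree → m.toSyn a < m.toSyn b

/-- The solving degree of `E` with respect to `m`: the least `d` such that `V_{E,d}` contains
a Gröbner basis of the ideal generated by `E`. -/
noncomputable def solvingDegree {k : Type*} [Field k] {σ : Type*} (m : MonomialOrder σ)
    (E : Finset (MvPolynomial σ k)) : ℕ :=
  sInf {d | ∃ G : Set (MvPolynomial σ k), G ⊆ (Vspace E d : Set (MvPolynomial σ k)) ∧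
      IsGroebnerBasis m (Ideal.span (E : Set (MvPolynomial σ k))) G}

/-- `G` is the reduced Gröbner basis of `I` w.r.t. `m`: it is a Gröbner basis, its elements
are monic, and no monomial of an element of `G` is divisible by the leading monomial of a
different element of `G`. -/
def IsReducedGroebnerBasis {k : Type*} [Field k] {σ : Type*} (m : MonomialOrder σ)
    (I : Ideal (MvPolynomial σ k)) (G : Set (MvPolynomial σ k)) : Prop :=
  IsGroebnerBasis m I G ∧ (∀ g ∈ G, g.coeff (leadExp m g) = 1) ∧
    ∀ g ∈ G, ∀ g' ∈ G, g' ≠ g → ∀ a ∈ g.support, ¬ leadExp m g' ≤ a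

/-! Every element of `V_{E,d}` lies in the ideal `(E)` and therefore vanishes at `a`. A polynomial
of degree at most one vanishing at `a` is a linear combination of the `X i - C (a i)`, so the `n`
independent `g i` span the same `n`-dimensional space as these linear forms, which hence lie in
`V_{E,d}`. A nonzero element of `(E)` vanishes at `a`, so it is not constant and its leading
monomial is divisible by some `X j`, the leading monomial of `X j - C (a j)`. -/

namespace Finsupp

theorem eq_zero_or_exists_eq_single_of_degree_le_one {σ : Type*} {e : σ →₀ ℕ}
    (he : e.degree ≤ 1) : e = 0 ∨ ∃ j, e = single j 1 := by
  rcases eq_or_ne e 0 with rfl | he0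
  · exact Or.inl rfl
  obtain ⟨j, hj⟩ := Finsupp.ne_iff.mp he0
  have hsingle : single j 1 ≤ e := single_le_iff.mpr (Nat.one_le_iff_ne_zero.mpr hj)
  have hrest : (e - single j 1).degree = 0 := by
    have := congrArg degree (tsub_add_cancel_of_le hsingle)
    rw [map_add, degree_single] at this
    omega
  rw [degree_eq_zero_iff, tsub_eq_zero_iff_le] at hrest
  exact Or.inr ⟨j, le_antisymm hrest hsingle⟩

end Finsupp

namespace MvPolynomial

variable {σ R : Type*}

theorem eq_C_add_sum_C_mul_X_of_totalDegree_le_one [CommSemiring R] [Fintype σ]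
    {p : MvPolynomial σ R} (hp : p.totalDegree ≤ 1) :
    p = C (coeff 0 p) + ∑ j, C (coeff (Finsupp.single j 1) p) * X j := by
  classical
  ext e
  simp only [coeff_add, coeff_C, coeff_sum, coeff_C_mul, coeff_X]
  by_cases he : e = 0 ∨ ∃ j, e = Finsupp.single j 1
  · rcases he with rfl | ⟨j, rfl⟩
    · simp
    · simp [Finsupp.single_left_inj, eq_comm (a := (0 : σ →₀ ℕ))]
  · have hcoeff : coeff e p = 0 := by
      by_contra hne
      exact he (Finsupp.eq_zero_or_exists_eq_single_of_degree_le_one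
        ((le_totalDegree (mem_support_iff.mpr hne)).trans hp))
    push Not at he
    simp [hcoeff, Ne.symm he.1, fun j => Ne.symm (he.2 j)]

theorem mem_span_X_sub_C_of_totalDegree_le_one [CommRing R] [Fintype σ] {p : MvPolynomial σ R}
    (a : σ → R) (hp : p.totalDegree ≤ 1) (hpa : eval a p = 0) :
    p ∈ Submodule.span R (Set.range fun j => X j - C (a j)) := by
  have hdecomp := eq_C_add_sum_C_mul_X_of_totalDegree_le_one hp
  have hconst : coeff 0 p = -∑ j, coeff (Finsupp.single j 1) p * a j := by
    rw [hdecomp] at hpa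
    simp only [eval_add, eval_C, eval_sum, eval_mul, eval_X] at hpa
    linear_combination hpa
  have hp' : p = ∑ j, coeff (Finsupp.single j 1) p • (X j - C (a j)) := by
    conv_lhs => rw [hdecomp, hconst]
    simp only [smul_sub, smul_eq_C_mul, Finset.sum_sub_distrib, map_neg, map_sum, C_mul]
    ring
  rw [hp']
  exact Submodule.sum_mem _ fun j _ => Submodule.smul_mem _ _ (Submodule.subset_span ⟨j, rfl⟩)

theorem linearIndependent_X_sub_C [CommRing R] (a : σ → R) :
    LinearIndependent R fun j => (X j - C (a j) : MvPolynomial σ R) := by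
  classical
  rw [linearIndependent_iff']
  intro s c hc i hi
  have h0 : (0 : σ →₀ ℕ) ≠ Finsupp.single i 1 := (Finsupp.single_ne_zero.mpr one_ne_zero).symm
  simpa [coeff_sum, coeff_X, coeff_C, h0, Finsupp.single_left_inj, hi] using
    congrArg (coeff (Finsupp.single i 1)) hc

theorem not_single_le_of_mem_support_X_sub_C [CommRing R] {i j : σ} (hji : j ≠ i) (c : R)
    {e : σ →₀ ℕ} (he : e ∈ (X i - C c).support) : ¬ Finsupp.single j 1 ≤ e := by
  classical
  intro hle
  have hje : e j ≠ 0 := Nat.one_le_iff_ne_zero.mp (Finsupp.single_le_iff.mp hle)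
  have he0 : (0 : σ →₀ ℕ) ≠ e := fun h => hje (by simp [← h])
  have hei : Finsupp.single i 1 ≠ e := fun h => hje (by simp [← h, hji])
  simp [coeff_X, coeff_C, he0, hei] at he

end MvPolynomial

theorem span_range_eq_of_linearIndependent {K V ι : Type*} [DivisionRing K] [AddCommGroup V]
    [Module K V] [Fintype ι] {v w : ι → V} (hv : LinearIndependent K v)
    (hw : LinearIndependent K w) (hwv : ∀ i, w i ∈ Submodule.span K (Set.range v)) :
    Submodule.span K (Set.range w) = Submodule.span K (Set.range v) :=
  have : FiniteDimensional K (Submodule.span K (Set.range v)) :=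
    FiniteDimensional.span_of_finite K (Set.finite_range v)
  Submodule.eq_of_le_of_finrank_eq (Submodule.span_le.mpr (Set.range_subset_iff.mpr hwv))
    (by rw [finrank_span_eq_card hw, finrank_span_eq_card hv])

theorem Vspace_le_span {k σ : Type*} [Field k] (E : Finset (MvPolynomial σ k)) (d : ℕ) :
    Vspace E d ≤ (Ideal.span (E : Set (MvPolynomial σ k))).restrictScalars k :=
  sInf_le ⟨fun _ hf _ => Ideal.subset_span hf, fun _ hg h _ => Ideal.mul_mem_right h _ hg⟩

theorem MonomialOrder.degree_ne_zero_of_eval_eq_zero {σ R : Type*} [CommSemiring R]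
    (m : MonomialOrder σ) {f : MvPolynomial σ R} {a : σ → R} (hf : f ≠ 0) (hfa : eval a f = 0) :
    m.degree f ≠ 0 := by
  intro h
  rw [m.eq_C_of_degree_eq_zero h, eval_C] at hfa
  rw [m.eq_C_of_degree_eq_zero h, hfa, C_0] at hf
  exact hf rfl

section Groebner

variable {k σ : Type*} [Field k] (m : MonomialOrder σ)

theorem leadExp_eq_degree (f : MvPolynomial σ k) : leadExp m f = m.degree f := rfl

variable {I : Ideal (MvPolynomial σ k)} {a : σ → k}

theorem isGroebnerBasis_range_X_sub_C (hXI : ∀ i, X i - C (a i) ∈ I)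
    (hIa : ∀ f ∈ I, eval a f = 0) :
    IsGroebnerBasis m I (Set.range fun i => X i - C (a i)) := by
  refine ⟨Set.forall_mem_range.mpr hXI, fun f hf hf0 => ?_⟩
  obtain ⟨j, hj⟩ := Finsupp.ne_iff.mp (m.degree_ne_zero_of_eval_eq_zero hf0 (hIa f hf))
  refine ⟨X j - C (a j), ⟨j, rfl⟩, (m.monic_X_sub_C j (a j)).ne_zero, ?_⟩
  rw [leadExp_eq_degree, leadExp_eq_degree, m.degree_X_sub_C]
  exact Finsupp.single_le_iff.mpr (Nat.one_le_iff_ne_zero.mpr hj)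

theorem isReducedGroebnerBasis_range_X_sub_C (hXI : ∀ i, X i - C (a i) ∈ I)
    (hIa : ∀ f ∈ I, eval a f = 0) :
    IsReducedGroebnerBasis m I (Set.range fun i => X i - C (a i)) := by
  refine ⟨isGroebnerBasis_range_X_sub_C m hXI hIa, Set.forall_mem_range.mpr fun i => ?_, ?_⟩
  · exact (m.monic_X_sub_C i (a i)).coeff_degree
  · rintro _ ⟨i, rfl⟩ _ ⟨j, rfl⟩ hne e he
    rw [leadExp_eq_degree, m.degree_X_sub_C]
    exact not_single_le_of_mem_support_X_sub_C (fun h => hne (by rw [h])) _ he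

end Groebner

theorem linear_forms_in_Vspace_of_simple_zero_general {k : Type*} [Field k] {n : ℕ}
    (E : Finset (MvPolynomial (Fin n) k)) (a : Fin n → k)
    (hzero : ∀ f ∈ E, MvPolynomial.aeval (fun i => algebraMap k (AlgebraicClosure k) (a i)) f = 0)
    (d : ℕ) (g : Fin n → MvPolynomial (Fin n) k)
    (hgV : ∀ i, g i ∈ Vspace E d) (hgdeg : ∀ i, (g i).totalDegree ≤ 1)
    (hgli : LinearIndependent k g) :
    (∀ i, X i - C (a i) ∈ Vspace E d) ∧
    ∀ m : MonomialOrder (Fin n),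
      IsReducedGroebnerBasis m (Ideal.span (E : Set (MvPolynomial (Fin n) k)))
        (Set.range fun i : Fin n => X i - C (a i)) := by
  have hEa : ∀ f ∈ E, eval a f = 0 := fun f hf =>
    (aeval_algebraMap_eq_zero_iff_of_injective (B := AlgebraicClosure k)
      (algebraMap k (AlgebraicClosure k)).injective).mp (hzero f hf)
  have hIa : ∀ f ∈ Ideal.span (E : Set (MvPolynomial (Fin n) k)), eval a f = 0 := fun f hf =>
    (Ideal.span_le (I := RingHom.ker (eval a))).mpr hEa hf
  have hspan : Submodule.span k (Set.range g) =
      Submodule.span k (Set.range fun i => X i - C (a i)) :=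
    span_range_eq_of_linearIndependent (linearIndependent_X_sub_C a) hgli fun i =>
      mem_span_X_sub_C_of_totalDegree_le_one a (hgdeg i) (hIa _ (Vspace_le_span E d (hgV i)))
  have hXV : ∀ i, X i - C (a i) ∈ Vspace E d := fun i =>
    Submodule.span_le.mpr (Set.range_subset_iff.mpr hgV) (hspan ▸ Submodule.subset_span ⟨i, rfl⟩)
  exact ⟨hXV, fun m =>
    isReducedGroebnerBasis_range_X_sub_C m (fun i => Vspace_le_span E d (hXV i)) hIa⟩

/-- If `E` has a simple zero `a ∈ k^n` and `V_{E,d}` contains `n` linearly independent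
polynomials of degree at most one, then `X_i - a_i ∈ V_{E,d}` for all `i`, and
`{X_0 - a_0, …, X_{n-1} - a_{n-1}}` is the reduced Gröbner basis of `(E)` with respect to
any monomial order. -/
theorem linear_forms_in_Vspace_of_simple_zero {k : Type*} [Field k] {n : ℕ}
    (E : Finset (MvPolynomial (Fin n) k)) (a : Fin n → k)
    (hrad : (Ideal.span (E : Set (MvPolynomial (Fin n) k))).IsRadical)
    (hzero : ∀ f ∈ E, MvPolynomial.aeval (fun i => algebraMap k (AlgebraicClosure k) (a i)) f = 0)
    (huniq : ∀ a' : Fin n → AlgebraicClosure k, (∀ f ∈ E, MvPolynomial.aeval a' f = 0) →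
      a' = fun i => algebraMap k (AlgebraicClosure k) (a i))
    (d : ℕ) (g : Fin n → MvPolynomial (Fin n) k)
    (hgV : ∀ i, g i ∈ Vspace E d) (hgdeg : ∀ i, (g i).totalDegree ≤ 1)
    (hgli : LinearIndependent k g) :
    (∀ i, X i - C (a i) ∈ Vspace E d) ∧
    ∀ m : MonomialOrder (Fin n),
      IsReducedGroebnerBasis m (Ideal.span (E : Set (MvPolynomial (Fin n) k)))
        (Set.range fun i : Fin n => X i - C (a i)) :=
  linear_forms_in_Vspace_of_simple_zero_general E a hzero d g hgV hgdeg hgli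
end

section
/- Let K be a field, let φ ∈ Aff_n(K) be an invertible affine change of coordinates acting on S = K[X_0,…,X_{n−1}] by substituting each variable X_i with the corresponding affine-linear form, and let E ⊆ S be finite. Then φ(V_{E,d}) = V_{φ(E),d} for every d ∈ ℕ. -/
/-!
An invertible affine substitution is a `K`-algebra automorphism of `S` that preserves total
degree, since neither it nor its inverse (again affine) can raise degree. Such an automorphism
carries the two closure conditions defining `V_{E,d}` onto those defining `V_{φ(E),d}`, so it maps
the smallest subspace satisfying the first onto the smallest one satisfying the second.
-/

open MvPolynomial

section Vspace

variable {k σ : Type*} [Field k]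

theorem mem_Vspace_of_mem {E : Finset (MvPolynomial σ k)} {d : ℕ} {f : MvPolynomial σ k}
    (hf : f ∈ E) (hdeg : f.totalDegree ≤ d) : f ∈ Vspace E d :=
  Submodule.mem_sInf.mpr fun _ hW => hW.1 f hf hdeg

theorem mul_mem_Vspace {E : Finset (MvPolynomial σ k)} {d : ℕ} {g : MvPolynomial σ k}
    (hg : g ∈ Vspace E d) (h : MvPolynomial σ k) (hdeg : (g * h).totalDegree ≤ d) :
    g * h ∈ Vspace E d :=
  Submodule.mem_sInf.mpr fun W hW => hW.2 g (Submodule.mem_sInf.mp hg W hW) h hdeg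

/-- Surjectivity is what lets a multiplier `h` of `F g` be pulled back to a multiplier of `g`. -/
theorem map_Vspace_of_surjective_of_totalDegree_eq [DecidableEq (MvPolynomial σ k)]
    (F : MvPolynomial σ k →ₐ[k] MvPolynomial σ k) (hF : Function.Surjective F)
    (hdeg : ∀ p, (F p).totalDegree = p.totalDegree) (E : Finset (MvPolynomial σ k)) (d : ℕ) :
    (Vspace E d).map F.toLinearMap = Vspace (E.image F) d := by
  apply le_antisymm
  · rw [Submodule.map_le_iff_le_comap]
    refine sInf_le ⟨fun f hf hd => ?_, fun g hg h hd => ?_⟩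
    · rw [Submodule.mem_comap, AlgHom.toLinearMap_apply]
      exact mem_Vspace_of_mem (Finset.mem_image_of_mem F hf) (by rwa [hdeg])
    · rw [Submodule.mem_comap, AlgHom.toLinearMap_apply] at hg ⊢
      rw [map_mul]
      exact mul_mem_Vspace hg (F h) (by rwa [← map_mul, hdeg])
  · refine sInf_le ⟨fun f hf hd => ?_, fun g hg h hd => ?_⟩
    · obtain ⟨p, hp, rfl⟩ := Finset.mem_image.mp hf
      rw [hdeg] at hd
      exact Submodule.mem_map_of_mem (mem_Vspace_of_mem hp hd)
    · obtain ⟨g, hg, rfl⟩ := hg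
      obtain ⟨h, rfl⟩ := hF h
      rw [AlgHom.toLinearMap_apply, ← map_mul] at hd ⊢
      exact Submodule.mem_map_of_mem (mul_mem_Vspace hg h (by rwa [← hdeg]))

end Vspace

theorem totalDegree_aeval_le_of_totalDegree_le_one {R σ τ : Type*} [CommSemiring R]
    (φ : σ → MvPolynomial τ R) (hφ : ∀ i, (φ i).totalDegree ≤ 1)
    (p : MvPolynomial σ R) :
    (aeval φ p).totalDegree ≤ p.totalDegree := by
  conv_lhs => rw [p.as_sum, map_sum]
  refine totalDegree_finsetSum_le fun s hs => ?_
  rw [aeval_monomial, algebraMap_eq]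
  refine (totalDegree_mul _ _).trans ?_
  rw [totalDegree_C, zero_add]
  calc (s.prod fun i e => φ i ^ e).totalDegree
      ≤ ∑ i ∈ s.support, (φ i ^ s i).totalDegree := totalDegree_finsetProd _ _
    _ ≤ ∑ i ∈ s.support, s i := Finset.sum_le_sum fun i _ =>
        (totalDegree_pow _ _).trans (by simpa using Nat.mul_le_mul_left (s i) (hφ i))
    _ ≤ p.totalDegree := le_totalDegree hs

section AffineSubst

open Matrix

variable {K ι : Type*} [Field K] [Fintype ι]

noncomputable def affineSubst (A : Matrix ι ι K) (b : ι → K) :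
    MvPolynomial ι K →ₐ[K] MvPolynomial ι K :=
  aeval fun i => (∑ j, C (A i j) * X j) + C (b i)

theorem totalDegree_affineSubst_le (A : Matrix ι ι K) (b : ι → K) (p : MvPolynomial ι K) :
    (affineSubst A b p).totalDegree ≤ p.totalDegree := by
  refine totalDegree_aeval_le_of_totalDegree_le_one _ (fun i => ?_) p
  refine (totalDegree_add _ _).trans (max_le ?_ (by simp))
  refine totalDegree_finsetSum_le fun j _ => (totalDegree_mul _ _).trans ?_
  simp [totalDegree_X]

/-- Substituting `Y ↦ N Y + e` into `X ↦ M X + c` gives `X ↦ (N M) X + (N c + e)`. -/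
theorem affineSubst_comp_affineSubst (M N : Matrix ι ι K) (c e : ι → K) :
    (affineSubst M c).comp (affineSubst N e) = affineSubst (N * M) (N *ᵥ c + e) := by
  refine algHom_ext fun i => ?_
  simp only [affineSubst, AlgHom.comp_apply, aeval_X, map_add, map_sum, map_mul, aeval_C,
    algebraMap_eq, Matrix.mul_apply, Matrix.mulVec, dotProduct, Pi.add_apply,
    Finset.mul_sum, mul_add, Finset.sum_mul]
  rw [Finset.sum_add_distrib, Finset.sum_comm, add_assoc]
  simp only [← C_mul, ← mul_assoc]

theorem affineSubst_one_zero [DecidableEq ι] :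
    affineSubst (1 : Matrix ι ι K) 0 = AlgHom.id K (MvPolynomial ι K) := by
  refine algHom_ext fun i => ?_
  simp [affineSubst, Matrix.one_apply, apply_ite C, ite_mul]

variable [DecidableEq ι] {A : Matrix ι ι K}

theorem affineSubst_comp_affineSubst_inv (hA : IsUnit A) (b : ι → K) :
    (affineSubst A b).comp (affineSubst A⁻¹ (-(A⁻¹ *ᵥ b))) = AlgHom.id K _ := by
  rw [affineSubst_comp_affineSubst, nonsing_inv_mul A ((isUnit_iff_isUnit_det A).mp hA),
    add_neg_cancel, affineSubst_one_zero]

theorem affineSubst_inv_comp_affineSubst (hA : IsUnit A) (b : ι → K) :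
    (affineSubst A⁻¹ (-(A⁻¹ *ᵥ b))).comp (affineSubst A b) = AlgHom.id K _ := by
  have hAA : A * A⁻¹ = 1 := mul_nonsing_inv A ((isUnit_iff_isUnit_det A).mp hA)
  rw [affineSubst_comp_affineSubst, hAA, mulVec_neg, mulVec_mulVec, hAA, one_mulVec,
    neg_add_cancel, affineSubst_one_zero]

theorem affineSubst_surjective (hA : IsUnit A) (b : ι → K) :
    Function.Surjective (affineSubst A b) := fun p =>
  ⟨_, AlgHom.congr_fun (affineSubst_comp_affineSubst_inv hA b) p⟩

theorem totalDegree_affineSubst (hA : IsUnit A) (b : ι → K) (p : MvPolynomial ι K) :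
    (affineSubst A b p).totalDegree = p.totalDegree := by
  refine (totalDegree_affineSubst_le A b p).antisymm ?_
  calc p.totalDegree
      = (affineSubst A⁻¹ (-(A⁻¹ *ᵥ b)) (affineSubst A b p)).totalDegree := by
        rw [← AlgHom.comp_apply, affineSubst_inv_comp_affineSubst hA, AlgHom.id_apply]
    _ ≤ (affineSubst A b p).totalDegree := totalDegree_affineSubst_le _ _ _

end AffineSubst

/-- An invertible affine change of coordinates maps `V_{E,d}` onto `V_{φ(E),d}`. -/
theorem map_Vspace_affine {K : Type*} [Field K] [DecidableEq K] {n : ℕ}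
    (A : Matrix (Fin n) (Fin n) K) (hA : IsUnit A) (b : Fin n → K)
    (E : Finset (MvPolynomial (Fin n) K)) (d : ℕ) :
    Submodule.map
      (MvPolynomial.aeval (fun i : Fin n =>
        (∑ j : Fin n, C (A i j) * X j) + C (b i)) :
          MvPolynomial (Fin n) K →ₐ[K] MvPolynomial (Fin n) K).toLinearMap
      (Vspace E d) =
    Vspace (E.image (MvPolynomial.aeval (fun i : Fin n =>
        (∑ j : Fin n, C (A i j) * X j) + C (b i)) :
          MvPolynomial (Fin n) K →ₐ[K] MvPolynomial (Fin n) K)) d :=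
  map_Vspace_of_surjective_of_totalDegree_eq (affineSubst A b) (affineSubst_surjective hA b)
    (totalDegree_affineSubst hA b) E d
end

section
/- Let k be a finite field of cardinality q^n and let e ≥ 1 be an integer. Then deg(overline{X^e}) = (q−1)n if q^n − 1 divides e, and deg(overline{X^e}) = w(e mod (q^n − 1)) otherwise; in both cases deg(overline{X^e}) ≤ w(e). -/
open MvPolynomial

/-- The reduced exponent `e'` determined by `X^{e'} = X^e mod (X^{q^n} - X)`:
`e' = e` if `e < q^n`, and otherwise `e'` is the representative of `e` modulo `q^n - 1`
lying in `{1, …, q^n - 1}`. -/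
def reduceExp (q n e : ℕ) : ℕ :=
  if e < q ^ n then e
  else if (q ^ n - 1) ∣ e then q ^ n - 1 else e % (q ^ n - 1)

/-- The exponent vector of `overline{X^e}`: the base-`q` digits of the reduced exponent. -/
noncomputable def expVec (q n e : ℕ) : Fin n →₀ ℕ :=
  Finsupp.equivFunOnFinite.symm fun j : Fin n => reduceExp q n e / q ^ (j : ℕ) % q

/-- The fake Weil descent map `f ↦ f̄` from `k[X]` to `k[X_0, …, X_{n-1}]`, the `k`-linear
extension of `X^e ↦ overline{X^e} = X_0^{e'_0} ⋯ X_{n-1}^{e'_{n-1}}`. -/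
noncomputable def fakeWeil {k : Type*} [Field k] (q n : ℕ) (f : Polynomial k) :
    MvPolynomial (Fin n) k :=
  f.sum fun e c => MvPolynomial.monomial (expVec q n e) c

/-- The fake Weil descent system `F̄_f` of a finite set `F ⊆ k[X]`:
`{f̄ : f ∈ F} ∪ {X_0^q - X_1, …, X_{n-2}^q - X_{n-1}, X_{n-1}^q - X_0}`. -/
noncomputable def fakeWeilSystem {k : Type*} [Field k] [DecidableEq k] (q n : ℕ) [NeZero n]
    (F : Finset (Polynomial k)) : Finset (MvPolynomial (Fin n) k) :=
  F.image (fakeWeil q n) ∪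
    Finset.image (fun i : Fin n => X i ^ q - X (i + 1)) Finset.univ

/-- The weight of a natural number: its digit sum in base `q`. -/
def wNat (q e : ℕ) : ℕ := (Nat.digits q e).sum


lemma wNat_eq {q : ℕ} (hq : 1 < q) (m : ℕ) :
    wNat q m = m % q + wNat q (m / q) := by
  rcases Nat.eq_zero_or_pos m with rfl | hm
  · simp [wNat]
  · rw [wNat, Nat.digits_def' hq hm, List.sum_cons]; rfl

lemma sum_div_pow_mod {q : ℕ} (hq : 1 < q) :
    ∀ n m, m < q ^ n → (∑ j : Fin n, m / q ^ (j : ℕ) % q) = wNat q m := by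
  intro n
  induction n with
  | zero =>
    intro m hm
    simp only [pow_zero, Nat.lt_one_iff] at hm
    subst hm; simp [wNat]
  | succ n ih =>
    intro m hm
    rw [Fin.sum_univ_succ]
    have h2 : ∀ j : Fin n, m / q ^ ((j.succ : Fin (n+1)) : ℕ) % q
        = (m / q) / q ^ (j : ℕ) % q := by
      intro j
      rw [Fin.val_succ, pow_succ', Nat.div_div_eq_div_mul]
    simp only [h2]
    rw [ih (m / q) (Nat.div_lt_of_lt_mul (by rw [← pow_succ']; exact hm))]
    simp only [Fin.val_zero, pow_zero, Nat.div_one]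
    exact (wNat_eq hq m).symm

lemma wNat_pow_sub_one {q : ℕ} (hq : 1 < q) :
    ∀ n, wNat q (q ^ n - 1) = (q - 1) * n := by
  intro n
  induction n with
  | zero => simp [wNat]
  | succ n ih =>
    have hq0 : 0 < q := by omega
    have hqn : 1 ≤ q ^ n := Nat.one_le_pow _ _ hq0
    have key : q ^ (n+1) - 1 = (q - 1) + q * (q ^ n - 1) := by
      have hs : q ^ (n+1) = q * q ^ n := by ring
      have hle : q ≤ q * q ^ n := Nat.le_mul_of_pos_right q (by positivity)
      have hmul : q * (q ^ n - 1) = q * q ^ n - q := by rw [Nat.mul_sub, Nat.mul_one]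
      omega
    rw [wNat_eq hq, key]
    have hmod : ((q - 1) + q * (q ^ n - 1)) % q = q - 1 := by
      rw [Nat.add_mul_mod_self_left, Nat.mod_eq_of_lt (by omega)]
    have hdiv : ((q - 1) + q * (q ^ n - 1)) / q = q ^ n - 1 := by
      rw [Nat.add_mul_div_left _ _ hq0, Nat.div_eq_of_lt (by omega), Nat.zero_add]
    rw [hmod, hdiv, ih]; ring

lemma wNat_mul_pow_add {q : ℕ} (hq : 1 < q) :
    ∀ n a b, b < q ^ n → wNat q (a * q ^ n + b) = wNat q a + wNat q b := by
  intro n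
  induction n with
  | zero =>
    intro a b hb
    simp only [pow_zero, Nat.lt_one_iff] at hb
    subst hb; simp [wNat]
  | succ n ih =>
    intro a b hb
    have hq0 : 0 < q := by omega
    rw [wNat_eq hq (a * q ^ (n+1) + b), wNat_eq hq b]
    have hsw : a * q ^ (n+1) = q * (a * q ^ n) := by ring
    have h1 : (a * q ^ (n+1) + b) % q = b % q := by
      rw [hsw, Nat.mul_add_mod]
    have h2 : (a * q ^ (n+1) + b) / q = a * q ^ n + b / q := by
      rw [hsw, Nat.mul_add_div hq0]
    rw [h1, h2, ih a (b / q) (Nat.div_lt_of_lt_mul (by rw [← pow_succ']; exact hb))]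
    omega

lemma wNat_add_le {q : ℕ} (hq : 1 < q) : ∀ s a b, a + b ≤ s →
    wNat q (a + b) ≤ wNat q a + wNat q b := by
  intro s
  induction s with
  | zero =>
    intro a b h
    obtain ⟨rfl, rfl⟩ : a = 0 ∧ b = 0 := by omega
    simp
  | succ s ih =>
    intro a b h
    rcases Nat.eq_zero_or_pos a with rfl | ha; · simp
    rcases Nat.eq_zero_or_pos b with rfl | hb; · simp
    have hda : a / q < a := Nat.div_lt_self ha hq
    have hdb : b / q < b := Nat.div_lt_self hb hq
    rw [wNat_eq hq (a + b), wNat_eq hq a, wNat_eq hq b]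
    have hmod : a % q + b % q < q ∨ q ≤ a % q + b % q := by omega
    have hdivs : (a + b) / q = a / q + b / q + if q ≤ a % q + b % q then 1 else 0 :=
      Nat.add_div (by omega)
    rcases hmod with hlt | hge
    · have h1 : (a + b) % q = a % q + b % q := by
        rw [Nat.add_mod, Nat.mod_eq_of_lt hlt]
      have h2 : (a + b) / q = a / q + b / q := by
        rw [hdivs, if_neg (by omega)]
        omega
      rw [h1, h2]
      have := ih (a / q) (b / q) (by omega)
      omega
    · have hma : a % q < q := Nat.mod_lt _ (by omega)
      have hmb : b % q < q := Nat.mod_lt _ (by omega)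
      have h1 : (a + b) % q + q = a % q + b % q := by
        rw [Nat.add_mod, Nat.mod_eq_sub_mod hge, Nat.mod_eq_of_lt (by omega)]
        omega
      have h2 : (a + b) / q = a / q + b / q + 1 := by
        rw [hdivs, if_pos hge]
      rw [h2]
      have i1 : wNat q (a / q + b / q + 1) ≤ wNat q (a / q + b / q) + wNat q 1 :=
        ih _ 1 (by omega)
      have i2 : wNat q (a / q + b / q) ≤ wNat q (a / q) + wNat q (b / q) :=
        ih _ _ (by omega)
      have hw1 : wNat q 1 = 1 := by
        rw [wNat_eq hq, Nat.mod_eq_of_lt hq, Nat.div_eq_of_lt hq]; simp [wNat]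
      omega

lemma wNat_key {q n : ℕ} (hq : 1 < q) (hn : 0 < n) : ∀ e, 1 ≤ e →
    ((q ^ n - 1) ∣ e → (q - 1) * n ≤ wNat q e) ∧
    (¬ (q ^ n - 1) ∣ e → wNat q (e % (q ^ n - 1)) ≤ wNat q e) := by
  intro e
  induction e using Nat.strong_induction_on with
  | _ e IH =>
  intro he
  have hq0 : 0 < q := by omega
  have hqn1 : 1 ≤ q ^ n := Nat.one_le_pow _ _ hq0
  have hqn2 : 2 ≤ q ^ n := by
    calc 2 ≤ q := hq
    _ = q ^ 1 := (pow_one q).symm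
    _ ≤ q ^ n := Nat.pow_le_pow_right hq0 hn
  by_cases hlt : e < q ^ n
  · constructor
    · intro hdvd
      have : e = q ^ n - 1 := by
        rcases hdvd with ⟨c, hc⟩
        rcases Nat.eq_zero_or_pos c with rfl | hc0; · omega
        have : q ^ n - 1 ≤ e := by
          calc q ^ n - 1 = (q ^ n - 1) * 1 := by ring
          _ ≤ (q ^ n - 1) * c := Nat.mul_le_mul_left _ hc0
          _ = e := hc.symm
        omega
      rw [this, wNat_pow_sub_one hq]
    · intro hnd
      have he' : e < q ^ n - 1 := by
        rcases Nat.lt_or_ge e (q ^ n - 1) with h | h; · exact h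
        have : e = q ^ n - 1 := by omega
        exact absurd (this ▸ dvd_refl _) hnd
      rw [Nat.mod_eq_of_lt he']
  · push_neg at hlt
    obtain ⟨a, b, hab, hblt, ha1⟩ :
        ∃ a b, e = a * q ^ n + b ∧ b < q ^ n ∧ 1 ≤ a :=
      ⟨e / q ^ n, e % q ^ n, by rw [Nat.mul_comm]; exact (Nat.div_add_mod e _).symm,
        Nat.mod_lt _ (by omega), Nat.one_le_div_iff (by omega) |>.mpr hlt⟩
    have hsplit : wNat q e = wNat q a + wNat q b := by
      rw [hab]; exact wNat_mul_pow_add hq n a b hblt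
    have hmod : (a + b) % (q ^ n - 1) = e % (q ^ n - 1) := by
      have hle : a ≤ a * q ^ n := Nat.le_mul_of_pos_right a (by omega)
      have hms : (q ^ n - 1) * a = a * q ^ n - a := by
        rw [Nat.sub_mul, Nat.one_mul, Nat.mul_comm]
      have he2 : e = (q ^ n - 1) * a + (a + b) := by omega
      rw [he2, Nat.mul_add_mod]
    have hablt : a + b < e := by
      have : 2 * a ≤ a * q ^ n := by
        calc 2 * a = a * 2 := by ring
        _ ≤ a * q ^ n := Nat.mul_le_mul_left _ hqn2
      omega
    have hdvd_iff : (q ^ n - 1) ∣ (a + b) ↔ (q ^ n - 1) ∣ e := by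
      rw [Nat.dvd_iff_mod_eq_zero, Nat.dvd_iff_mod_eq_zero, hmod]
    have hsub : wNat q (a + b) ≤ wNat q e := by
      rw [hsplit]; exact wNat_add_le hq (a + b) a b le_rfl
    have IH' := IH (a + b) hablt (by omega)
    constructor
    · intro hdvd
      exact le_trans (IH'.1 (hdvd_iff.mpr hdvd)) hsub
    · intro hnd
      have := IH'.2 (fun h => hnd (hdvd_iff.mp h))
      rw [hmod] at this
      exact le_trans this hsub


lemma reduceExp_lt {q n e : ℕ} (hq : 1 < q) (hn : 0 < n) : reduceExp q n e < q ^ n := by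
  have hqn2 : 2 ≤ q ^ n := by
    calc 2 ≤ q := hq
    _ = q ^ 1 := (pow_one q).symm
    _ ≤ q ^ n := Nat.pow_le_pow_right (by omega) hn
  unfold reduceExp
  split_ifs with h1 h2
  · exact h1
  · omega
  · have := Nat.mod_lt e (show 0 < q ^ n - 1 by omega)
    omega

lemma reduceExp_of_dvd {q n e : ℕ} (hq : 1 < q) (hn : 0 < n) (he : 1 ≤ e)
    (hdvd : (q ^ n - 1) ∣ e) : reduceExp q n e = q ^ n - 1 := by
  have hqn2 : 2 ≤ q ^ n := by
    calc 2 ≤ q := hq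
    _ = q ^ 1 := (pow_one q).symm
    _ ≤ q ^ n := Nat.pow_le_pow_right (by omega) hn
  unfold reduceExp
  split_ifs with h1
  · obtain ⟨c, hc⟩ := hdvd
    rcases Nat.eq_zero_or_pos c with rfl | hc0
    · omega
    · have : q ^ n - 1 ≤ e := by
        calc q ^ n - 1 = (q ^ n - 1) * 1 := (Nat.mul_one _).symm
        _ ≤ (q ^ n - 1) * c := Nat.mul_le_mul_left _ hc0
        _ = e := hc.symm
      omega
  · rfl

lemma reduceExp_of_not_dvd {q n e : ℕ} (hq : 1 < q) (hn : 0 < n)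
    (hnd : ¬ (q ^ n - 1) ∣ e) : reduceExp q n e = e % (q ^ n - 1) := by
  have hqn2 : 2 ≤ q ^ n := by
    calc 2 ≤ q := hq
    _ = q ^ 1 := (pow_one q).symm
    _ ≤ q ^ n := Nat.pow_le_pow_right (by omega) hn
  unfold reduceExp
  split_ifs with h1
  · have he' : e < q ^ n - 1 := by
      rcases Nat.lt_or_ge e (q ^ n - 1) with h | h
      · exact h
      · have : e = q ^ n - 1 := by omega
        exact absurd (this ▸ dvd_refl _) hnd
    exact (Nat.mod_eq_of_lt he').symm
  · rfl

/-- The weight of a univariate polynomial: the maximal weight of an exponent appearing in it. -/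
def wPoly {k : Type*} [Field k] (q : ℕ) (f : Polynomial k) : ℕ :=
  f.support.sup fun e => wNat q e

/-- The total degree of `overline{X^e}` equals `(q-1)n` if `q^n - 1 ∣ e`, and equals
`w(e mod (q^n - 1))` otherwise; in both cases it is at most `w(e)`. -/
theorem totalDegree_fakeWeil_pow {k : Type*} [Field k] [Fintype k]
    (q n : ℕ) (hq : IsPrimePow q) [NeZero n] (hcard : Fintype.card k = q ^ n)
    (e : ℕ) (he : 1 ≤ e) :
    (if (q ^ n - 1) ∣ e then
        (fakeWeil q n (Polynomial.X ^ e : Polynomial k)).totalDegree = (q - 1) * n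
      else
        (fakeWeil q n (Polynomial.X ^ e : Polynomial k)).totalDegree =
          wNat q (e % (q ^ n - 1))) ∧
    (fakeWeil q n (Polynomial.X ^ e : Polynomial k)).totalDegree ≤ wNat q e := by
  have hq1 : 1 < q := hq.two_le
  have hn : 0 < n := Nat.pos_of_ne_zero (NeZero.ne n)
  have hfw : fakeWeil q n (Polynomial.X ^ e : Polynomial k)
      = MvPolynomial.monomial (expVec q n e) (1 : k) := by
    rw [fakeWeil, Polynomial.X_pow_eq_monomial, Polynomial.sum_monomial_index]
    simp
  have hdeg : (fakeWeil q n (Polynomial.X ^ e : Polynomial k)).totalDegree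
      = wNat q (reduceExp q n e) := by
    rw [hfw, MvPolynomial.totalDegree_monomial _ (one_ne_zero : (1 : k) ≠ 0), expVec,
      Finsupp.sum_fintype _ _ (fun _ => rfl)]
    exact sum_div_pow_mod hq1 n _ (reduceExp_lt hq1 hn)
  have hkey := wNat_key hq1 hn e he
  constructor
  · by_cases hdvd : (q ^ n - 1) ∣ e
    · rw [if_pos hdvd, hdeg, reduceExp_of_dvd hq1 hn he hdvd, wNat_pow_sub_one hq1]
    · rw [if_neg hdvd, hdeg, reduceExp_of_not_dvd hq1 hn hdvd]
  · rw [hdeg]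
    by_cases hdvd : (q ^ n - 1) ∣ e
    · rw [reduceExp_of_dvd hq1 hn he hdvd, wNat_pow_sub_one hq1]
      exact hkey.1 hdvd
    · rw [reduceExp_of_not_dvd hq1 hn hdvd]
      exact hkey.2 hdvd
end

section
/- Let k be a finite field of cardinality q^n, let F ⊆ k[X] be finite, let I ⊆ k[X] be the ideal generated by F ∪ {X^{q^n} − X}, and let Ī ⊆ S be the ideal generated by F̄_f. Then for every h ∈ k[X], h ∈ I if and only if h̄ ∈ Ī. -/
open MvPolynomial

private lemma sum_div_mod_mul_pow (q m : ℕ) (t : ℕ) :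
    ∑ j ∈ Finset.range t, m / q ^ j % q * q ^ j = m % q ^ t := by
  induction t with
  | zero => simp [Nat.mod_one]
  | succ t ih =>
    rw [Finset.sum_range_succ, ih, pow_succ, Nat.mod_mul]
    ring

private lemma fin_val_add_one {n : ℕ} [NeZero n] (i : Fin n) :
    ((i + 1 : Fin n) : ℕ) = (i.val + 1) % n := by
  have h1 : ((i + 1 : Fin n) : ℕ) = ((i : ℕ) + ((1 : Fin n) : ℕ)) % n := by
    rw [Fin.add_def]
  rw [h1, Fin.val_one', Nat.add_mod_mod]

/-- `h ∈ (F ∪ {X^{q^n} - X})` if and only if `h̄` lies in the ideal generated by `F̄_f`. -/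
theorem mem_span_iff_fakeWeil_mem_span {k : Type*} [Field k] [Fintype k] [DecidableEq k]
    (q n : ℕ) (hq : IsPrimePow q) [NeZero n] (hcard : Fintype.card k = q ^ n)
    (F : Finset (Polynomial k)) (h : Polynomial k) :
    h ∈ Ideal.span ((F : Set (Polynomial k)) ∪ {Polynomial.X ^ q ^ n - Polynomial.X}) ↔
    fakeWeil q n h ∈
      Ideal.span (fakeWeilSystem q n F : Set (MvPolynomial (Fin n) k)) := by
  classical
  have hq2 : 2 ≤ q := hq.two_le
  have hn : 0 < n := Nat.pos_of_ne_zero (NeZero.ne n)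
  have hqn : 2 ≤ q ^ n := le_trans hq2 (by
    calc q = q ^ 1 := (pow_one q).symm
    _ ≤ q ^ n := Nat.pow_le_pow_right (by omega) hn)
  set B : Set (MvPolynomial (Fin n) k) :=
    Set.range (fun i : Fin n => X i ^ q - X (i + 1)) with hB
  set J : Ideal (MvPolynomial (Fin n) k) := Ideal.span B with hJ
  set Qm : MvPolynomial (Fin n) k →ₐ[k] MvPolynomial (Fin n) k ⧸ J :=
    Ideal.Quotient.mkₐ k J with hQm
  set x0 : MvPolynomial (Fin n) k ⧸ J := Qm (X 0) with hx0
  -- the generators relations in the quotient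
  have hgen : ∀ i : Fin n, Qm (X (i + 1)) = Qm (X i) ^ q := by
    intro i
    have hmem : (X i ^ q - X (i + 1) : MvPolynomial (Fin n) k) ∈ J :=
      Ideal.subset_span ⟨i, rfl⟩
    have h0 : Qm (X i ^ q - X (i + 1)) = 0 := by
      rw [hQm, Ideal.Quotient.mkₐ_eq_mk, Ideal.Quotient.eq_zero_iff_mem]
      exact hmem
    rw [map_sub, sub_eq_zero, map_pow] at h0
    exact h0.symm
  -- Lemma A : images of the variables
  have hXj : ∀ (m : ℕ) (hm : m < n), Qm (X (⟨m, hm⟩ : Fin n)) = x0 ^ q ^ m := by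
    intro m
    induction m with
    | zero => intro hm; rw [pow_zero, pow_one]; rfl
    | succ m ih =>
      intro hm
      have hm' : m < n := by omega
      have h1 : ((⟨m, hm'⟩ : Fin n) + 1) = (⟨m + 1, hm⟩ : Fin n) := by
        apply Fin.ext
        rw [fin_val_add_one]
        exact Nat.mod_eq_of_lt hm
      rw [← h1, hgen, ih hm', ← pow_mul, ← pow_succ]
  -- Lemma B : x0 ^ (q ^ n) = x0
  have hB0 : x0 ^ q ^ n = x0 := by
    have hlast : n - 1 < n := by omega
    have h1 : ((⟨n - 1, hlast⟩ : Fin n) + 1) = (0 : Fin n) := by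
      apply Fin.ext
      rw [fin_val_add_one]
      simp only [Fin.val_zero]
      have : n - 1 + 1 = n := by omega
      rw [this, Nat.mod_self]
    have hqe : q ^ n = q ^ (n - 1) * q := by
      rw [← pow_succ]
      congr 1
      omega
    calc x0 ^ q ^ n = (x0 ^ q ^ (n - 1)) ^ q := by rw [← pow_mul, ← hqe]
      _ = Qm (X (⟨n - 1, hlast⟩ : Fin n)) ^ q := by rw [hXj]
      _ = Qm (X ((⟨n - 1, hlast⟩ : Fin n) + 1)) := (hgen _).symm
      _ = x0 := by rw [h1]
  -- periodicity
  have hper : ∀ a : ℕ, 1 ≤ a → x0 ^ (a + (q ^ n - 1)) = x0 ^ a := by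
    intro a ha
    obtain ⟨b, rfl⟩ := Nat.exists_eq_add_of_le ha
    have he : 1 + b + (q ^ n - 1) = b + q ^ n := by omega
    rw [he, pow_add, hB0, Nat.add_comm 1 b, pow_succ]
  have hperm : ∀ (t a : ℕ), 1 ≤ a → x0 ^ (a + t * (q ^ n - 1)) = x0 ^ a := by
    intro t
    induction t with
    | zero => intro a _; simp
    | succ t ih =>
      intro a ha
      have he : a + (t + 1) * (q ^ n - 1) = (a + (q ^ n - 1)) + t * (q ^ n - 1) := by ring
      rw [he, ih _ (by omega), hper a ha]
  -- Lemma C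
  have hredC : ∀ e : ℕ, x0 ^ reduceExp q n e = x0 ^ e := by
    intro e
    unfold reduceExp
    split_ifs with h1 h2
    · rfl
    · obtain ⟨c, hc⟩ := h2
      rcases Nat.eq_zero_or_pos c with rfl | hcpos
      · omega
      · obtain ⟨c', rfl⟩ := Nat.exists_eq_add_of_le hcpos
        have he : e = (q ^ n - 1) + c' * (q ^ n - 1) := by rw [hc]; ring
        rw [he]
        exact (hperm c' (q ^ n - 1) (by omega)).symm
    · have h0 : 1 ≤ e % (q ^ n - 1) :=
        Nat.one_le_iff_ne_zero.2 (fun h0 => h2 (Nat.dvd_of_mod_eq_zero h0))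
      conv_rhs => rw [← Nat.mod_add_div' e (q ^ n - 1)]
      exact (hperm (e / (q ^ n - 1)) (e % (q ^ n - 1)) h0).symm
  -- Lemma D : image of monomials
  have hmon : ∀ e : ℕ, Qm (monomial (expVec q n e) (1 : k)) = x0 ^ e := by
    intro e
    have hlt : reduceExp q n e < q ^ n := by
      unfold reduceExp
      split_ifs with h1 h2
      · exact h1
      · omega
      · have := Nat.mod_lt e (show 0 < q ^ n - 1 by omega)
        omega
    have hm1 : (monomial (expVec q n e) (1 : k)) =
        (expVec q n e).prod fun j a => X j ^ a := by
      rw [monomial_eq, map_one, one_mul]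
    rw [hm1, Finsupp.prod_fintype _ _ (fun i => pow_zero _), map_prod]
    have hterm : ∀ j : Fin n, Qm (X j ^ (expVec q n e j)) =
        x0 ^ (reduceExp q n e / q ^ (j : ℕ) % q * q ^ (j : ℕ)) := by
      intro j
      have hXj' : Qm (X j) = x0 ^ q ^ (j : ℕ) := by
        have := hXj j.1 j.2
        simpa using this
      have hv : expVec q n e j = reduceExp q n e / q ^ (j : ℕ) % q := by
        simp [expVec]
      rw [map_pow, hXj', hv, ← pow_mul, Nat.mul_comm]
    rw [Finset.prod_congr rfl (fun j _ => hterm j), Finset.prod_pow_eq_pow_sum]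
    rw [Fin.sum_univ_eq_sum_range (fun j => reduceExp q n e / q ^ j % q * q ^ j) n,
      sum_div_mod_mul_pow, Nat.mod_eq_of_lt hlt, hredC]
  -- Lemma E : Qm ∘ fakeWeil = aeval x0
  have hfw : ∀ f : Polynomial k, Qm (fakeWeil q n f) = Polynomial.aeval x0 f := by
    intro f
    rw [fakeWeil, Polynomial.aeval_def, Polynomial.eval₂_eq_sum,
      Polynomial.sum_def, Polynomial.sum_def, map_sum]
    refine Finset.sum_congr rfl fun e _ => ?_
    have hm1 : (monomial (expVec q n e) (f.coeff e) : MvPolynomial (Fin n) k) =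
        C (f.coeff e) * monomial (expVec q n e) 1 := by
      rw [C_mul_monomial, mul_one]
    rw [hm1, map_mul, hmon, ← MvPolynomial.algebraMap_eq, AlgHom.commutes]
  -- the reverse map π
  set pii : MvPolynomial (Fin n) k →ₐ[k] Polynomial k :=
    MvPolynomial.aeval (fun j : Fin n => Polynomial.X ^ q ^ (j : ℕ)) with hpii
  set K0 : Ideal (Polynomial k) :=
    Ideal.span {Polynomial.X ^ q ^ n - Polynomial.X} with hK0
  have hpiB : ∀ b ∈ B, pii b ∈ K0 := by
    rintro _ ⟨i, rfl⟩
    simp only [hpii, map_sub, map_pow, MvPolynomial.aeval_X]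
    rw [← pow_mul, ← pow_succ]
    by_cases hi : i.val + 1 < n
    · have hv : ((i + 1 : Fin n) : ℕ) = i.val + 1 := by
        rw [fin_val_add_one]; exact Nat.mod_eq_of_lt hi
      rw [hv, sub_self]
      exact zero_mem _
    · have hin : i.val + 1 = n := by have := i.2; omega
      have hv : ((i + 1 : Fin n) : ℕ) = 0 := by
        rw [fin_val_add_one, hin, Nat.mod_self]
      rw [hv, hin, pow_zero, pow_one]
      exact Ideal.subset_span rfl
  -- kernel of aeval x0 is contained in K0
  have hker : ∀ g : Polynomial k, Polynomial.aeval x0 g = 0 → g ∈ K0 := by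
    intro g hg
    have h1 : Qm (Polynomial.aeval (X 0 : MvPolynomial (Fin n) k) g) = 0 := by
      rw [← Polynomial.aeval_algHom_apply]
      exact hg
    have h2 : Polynomial.aeval (X 0 : MvPolynomial (Fin n) k) g ∈ J := by
      rwa [hQm, Ideal.Quotient.mkₐ_eq_mk, Ideal.Quotient.eq_zero_iff_mem] at h1
    have h3 : pii (Polynomial.aeval (X 0 : MvPolynomial (Fin n) k) g) ∈ K0 := by
      have hm : Ideal.map pii J ≤ K0 := by
        rw [hJ, Ideal.map_span]
        refine Ideal.span_le.2 ?_
        rintro _ ⟨b, hb, rfl⟩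
        exact hpiB b hb
      exact hm (Ideal.mem_map_of_mem _ h2)
    rwa [← Polynomial.aeval_algHom_apply, hpii, MvPolynomial.aeval_X, Fin.val_zero, pow_zero,
      pow_one, Polynomial.aeval_X_left_apply] at h3
  -- X^{q^n} - X is in the kernel
  have hevp : Polynomial.aeval x0 (Polynomial.X ^ q ^ n - Polynomial.X : Polynomial k) = 0 := by
    rw [map_sub, map_pow, Polynomial.aeval_X, hB0, sub_self]
  -- surjectivity of aeval x0
  have hQeq : Qm = (Polynomial.aeval x0).comp pii := by
    apply MvPolynomial.algHom_ext
    intro j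
    have hXj' : Qm (X j) = x0 ^ q ^ (j : ℕ) := by
      have := hXj j.1 j.2
      simpa using this
    rw [hXj', AlgHom.comp_apply, hpii, MvPolynomial.aeval_X, map_pow, Polynomial.aeval_X]
  have hsurj : Function.Surjective (Polynomial.aeval x0 : Polynomial k →ₐ[k] _) := by
    intro s
    obtain ⟨p, rfl⟩ := Ideal.Quotient.mkₐ_surjective k J s
    exact ⟨pii p, by rw [← AlgHom.comp_apply, ← hQeq]⟩
  -- kernel equals K0
  have hkerK : Ideal.comap (Polynomial.aeval x0 : Polynomial k →ₐ[k] _) ⊥ = K0 := by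
    apply le_antisymm
    · intro g hg
      exact hker g (Ideal.mem_bot.1 (Ideal.mem_comap.1 hg))
    · rw [hK0]
      refine Ideal.span_le.2 ?_
      rintro _ rfl
      exact Ideal.mem_comap.2 (Ideal.mem_bot.2 hevp)
  -- the key equivalence
  have key : ∀ g : Polynomial k,
      (g ∈ Ideal.span (F : Set (Polynomial k)) ⊔ K0 ↔
        Polynomial.aeval x0 g ∈
          Ideal.map (Polynomial.aeval x0 : Polynomial k →ₐ[k] _)
            (Ideal.span (F : Set (Polynomial k)))) := by
    intro g
    have hcm : Ideal.comap (Polynomial.aeval x0 : Polynomial k →ₐ[k] _)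
        (Ideal.map (Polynomial.aeval x0 : Polynomial k →ₐ[k] _)
          (Ideal.span (F : Set (Polynomial k)))) =
        Ideal.span (F : Set (Polynomial k)) ⊔ K0 := by
      rw [Ideal.comap_map_of_surjective _ hsurj, hkerK]
    rw [← hcm]
    rfl
  -- assemble
  have hLHS : Ideal.span ((F : Set (Polynomial k)) ∪ {Polynomial.X ^ q ^ n - Polynomial.X}) =
      Ideal.span (F : Set (Polynomial k)) ⊔ K0 := by
    rw [Ideal.span_union]
  have hRHS : (fakeWeilSystem q n F : Set (MvPolynomial (Fin n) k)) =
      (fakeWeil q n '' (F : Set (Polynomial k))) ∪ B := by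
    rw [fakeWeilSystem]
    push_cast
    rw [hB, Set.image_univ]
  rw [hLHS, hRHS, Ideal.span_union, ← hJ, key]
  -- now handle the RHS
  have hcm2 : Ideal.comap (Ideal.Quotient.mk J)
      (Ideal.map (Ideal.Quotient.mk J)
        (Ideal.span (fakeWeil q n '' (F : Set (Polynomial k))) ⊔ J)) =
      Ideal.span (fakeWeil q n '' (F : Set (Polynomial k))) ⊔ J := by
    rw [Ideal.comap_map_of_surjective _ Ideal.Quotient.mk_surjective, ← RingHom.ker_eq_comap_bot,
      Ideal.mk_ker, sup_assoc, sup_idem]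
  have hmap2 : Ideal.map (Ideal.Quotient.mk J)
      (Ideal.span (fakeWeil q n '' (F : Set (Polynomial k))) ⊔ J) =
      Ideal.map (Polynomial.aeval x0 : Polynomial k →ₐ[k] _)
        (Ideal.span (F : Set (Polynomial k))) := by
    rw [Ideal.map_sup, Ideal.map_quotient_self, sup_bot_eq, Ideal.map_span, Ideal.map_span,
      Set.image_image]
    congr 1
    ext y
    constructor
    · rintro ⟨f, hf, rfl⟩
      exact ⟨f, hf, (hfw f).symm⟩
    · rintro ⟨f, hf, rfl⟩
      exact ⟨f, hf, hfw f⟩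
  have hmk : Ideal.Quotient.mk J (fakeWeil q n h) = Polynomial.aeval x0 h := by
    rw [← Ideal.Quotient.mkₐ_eq_mk (R₁ := k), ← hQm]
    exact hfw h
  rw [← hcm2, Ideal.mem_comap, hmap2, hmk]
end
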